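/- Let Ω be a locally compact Hausdorff space and Γ a nondegenerate Banach module over C₀(Ω). Suppose N is a map assigning to each s ∈ Γ a positive continuous linear functional N(s) on C₀(Ω) such that (i) ‖N(s)‖ = ‖s‖ for all s ∈ Γ; (ii) N(f•s)(g) = N(s)(|f|·g) for all f, g ∈ C₀(Ω) and s ∈ Γ; (iii) N(s₁+s₂)(f) ≤ N(s₁)(f) + N(s₂)(f) for all s₁, s₂ ∈ Γ and all real-valued f ∈ C₀(Ω) with f ≥ 0. Then N is uniquely determined: N(s)(f) = ‖f•s‖ for every s ∈ Γ and every real-valued f ∈ C₀(Ω) with f ≥ 0. -/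

import Mathlib

open scoped ZeroAtInfty

noncomputable section

variable {𝕜 : Type*} [RCLike 𝕜] {Ω : Type*} [TopologicalSpace Ω]

/-- A Banach module structure over `C₀(Ω, 𝕜)` on a `𝕜`-Banach space `Γ`. -/
structure C0Module (𝕜 : Type*) [RCLike 𝕜] (Ω : Type*) [TopologicalSpace Ω]
    (Γ : Type*) [NormedAddCommGroup Γ] [NormedSpace 𝕜 Γ] where
  smul : C₀(Ω, 𝕜) →L[𝕜] Γ →L[𝕜] Γ
  mul_smul : ∀ (f g : C₀(Ω, 𝕜)) (s : Γ), smul (f * g) s = smul f (smul g s)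
  norm_smul_le : ∀ (f : C₀(Ω, 𝕜)) (s : Γ), ‖smul f s‖ ≤ ‖f‖ * ‖s‖

variable {Γ : Type*} [NormedAddCommGroup Γ] [NormedSpace 𝕜 Γ]

/-- Nondegeneracy of a Banach module over `C₀(Ω, 𝕜)`. -/
def C0Module.Nondegenerate (M : C0Module 𝕜 Ω Γ) : Prop :=
  Dense (Submodule.span 𝕜 {x : Γ | ∃ (f : C₀(Ω, 𝕜)) (s : Γ), M.smul f s = x} : Set Γ)

/-- The inclusion `C₀(Ω, ℝ) ⊆ C₀(Ω, 𝕜)`. -/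
def ofRealC0 (𝕜 : Type*) [RCLike 𝕜] {Ω : Type*} [TopologicalSpace Ω] (f : C₀(Ω, ℝ)) :
    C₀(Ω, 𝕜) where
  toFun := fun x => (f x : 𝕜)
  continuous_toFun := RCLike.continuous_ofReal.comp f.continuous
  zero_at_infty' := by
    have h2 : Filter.Tendsto (fun r : ℝ => (r : 𝕜)) (nhds 0) (nhds 0) := by
      simpa using (RCLike.continuous_ofReal (K := 𝕜)).tendsto 0
    exact h2.comp f.zero_at_infty'

/-- The pointwise maximum of two functions in `C₀(Ω, ℝ)`. -/
def supC0 (f g : C₀(Ω, ℝ)) : C₀(Ω, ℝ) where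
  toFun := fun x => max (f x) (g x)
  continuous_toFun := f.continuous.max g.continuous
  zero_at_infty' := by simpa using f.zero_at_infty'.max g.zero_at_infty'

/-- The AM-identity: `‖(f₁ ⊔ f₂) • s‖ = max ‖f₁ • s‖ ‖f₂ • s‖` for nonnegative real-valued
`f₁, f₂ ∈ C₀(Ω, ℝ)`. -/
def C0Module.IsAM (M : C0Module 𝕜 Ω Γ) : Prop :=
  ∀ (f₁ f₂ : C₀(Ω, ℝ)), (∀ x, 0 ≤ f₁ x) → (∀ x, 0 ≤ f₂ x) → ∀ s : Γ,
    ‖M.smul (ofRealC0 𝕜 (supC0 f₁ f₂)) s‖ =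
      max ‖M.smul (ofRealC0 𝕜 f₁) s‖ ‖M.smul (ofRealC0 𝕜 f₂) s‖

/-- A `U₀(Ω)`-valued norm on a Banach module `Γ` over `C₀(Ω, 𝕜)`. -/
structure IsU0Norm (M : C0Module 𝕜 Ω Γ) (N : Γ → Ω → ℝ) : Prop where
  nonneg : ∀ (s : Γ) (x : Ω), 0 ≤ N s x
  upperSemicontinuous : ∀ s : Γ, UpperSemicontinuous (N s)
  zero_at_infty : ∀ s : Γ, ∀ ε > 0, ∃ K : Set Ω, IsCompact K ∧ ∀ x ∉ K, N s x ≤ ε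
  sup_eq_norm : ∀ s : Γ, (⨆ x : Ω, N s x) = ‖s‖
  smul_eq : ∀ (f : C₀(Ω, 𝕜)) (s : Γ) (x : Ω), N (M.smul f s) x = ‖f x‖ * N s x
  subadd : ∀ (s₁ s₂ : Γ) (x : Ω), N (s₁ + s₂) x ≤ N s₁ x + N s₂ x

/-- The canonical candidate for the `U₀(Ω)`-valued norm. -/
def normFormula (M : C0Module 𝕜 Ω Γ) (s : Γ) (x : Ω) : ℝ :=
  sInf {r : ℝ | ∃ f : C₀(Ω, ℝ), (∀ y, 0 ≤ f y) ∧ f x = 1 ∧ r = ‖M.smul (ofRealC0 𝕜 f) s‖}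


/-- The pointwise modulus `|f| : x ↦ |f x|` of `f ∈ C₀(Ω, 𝕜)`, regarded as a `𝕜`-valued
function in `C₀(Ω, 𝕜)`. -/
def absC0 (f : C₀(Ω, 𝕜)) : C₀(Ω, 𝕜) where
  toFun := fun x => (‖f x‖ : 𝕜)
  continuous_toFun := RCLike.continuous_ofReal.comp f.continuous.norm
  zero_at_infty' := by
    have h : Filter.Tendsto (fun x => ‖f x‖) (Filter.cocompact Ω) (nhds 0) := by
      simpa using f.zero_at_infty'.norm
    have h2 : Filter.Tendsto (fun r : ℝ => (r : 𝕜)) (nhds 0) (nhds 0) := by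
      simpa using (RCLike.continuous_ofReal (K := 𝕜)).tendsto 0
    exact h2.comp h

/-!
Write `ψ = N s` and fix `f ≥ 0`. A positive functional satisfies `|ψ (f * g)| ≤ ψ f * ‖g‖`, so by
(ii) and (i), `‖f • s‖ = ‖N (f • s)‖ ≤ ψ f`. Conversely, the functions `e_δ = min (f / δ) 1` lie
in the unit ball and `f * e_δ → f` as `δ → 0`, so `ψ f = lim ψ (f * e_δ) = lim N (f • s) e_δ`,
which is at most `‖f • s‖`.
-/

open Filter Topology

namespace ZeroAtInftyContinuousMap

variable {α : Type*} [TopologicalSpace α]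

theorem norm_apply_le {β : Type*} [SeminormedAddCommGroup β] (f : C₀(α, β)) (x : α) :
    ‖f x‖ ≤ ‖f‖ :=
  norm_toBCF_eq_norm (f := f) ▸ f.toBCF.norm_coe_le_norm x

theorem norm_le {β : Type*} [SeminormedAddCommGroup β] {f : C₀(α, β)} {C : ℝ} (hC : 0 ≤ C) :
    ‖f‖ ≤ C ↔ ∀ x, ‖f x‖ ≤ C := by
  rw [← norm_toBCF_eq_norm]
  exact BoundedContinuousFunction.norm_le hC

variable {β γ : Type*} [TopologicalSpace β] [Zero β] [TopologicalSpace γ] [Zero γ]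

def compLeft (g : C(β, γ)) (hg : g 0 = 0) (f : C₀(α, β)) : C₀(α, γ) where
  toFun := g ∘ f
  continuous_toFun := g.continuous.comp f.continuous
  zero_at_infty' := (hg ▸ g.continuous.tendsto 0).comp f.zero_at_infty'

@[simp]
theorem compLeft_apply (g : C(β, γ)) (hg : g 0 = 0) (f : C₀(α, β)) (x : α) :
    compLeft g hg f x = g (f x) := rfl

end ZeroAtInftyContinuousMap

open ZeroAtInftyContinuousMap

@[simp]
theorem ofRealC0_apply (f : C₀(Ω, ℝ)) (x : Ω) : ofRealC0 𝕜 f x = (f x : 𝕜) := rfl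

theorem ofRealC0_sub (f g : C₀(Ω, ℝ)) :
    ofRealC0 𝕜 (f - g) = ofRealC0 𝕜 f - ofRealC0 𝕜 g := by
  ext x; simp

theorem ofRealC0_smul (r : ℝ) (f : C₀(Ω, ℝ)) :
    ofRealC0 𝕜 (r • f) = (r : 𝕜) • ofRealC0 𝕜 f := by
  ext x; simp

theorem absC0_ofRealC0 {f : C₀(Ω, ℝ)} (hf : ∀ x, 0 ≤ f x) :
    absC0 (ofRealC0 𝕜 f) = ofRealC0 𝕜 f := by
  ext x
  simp [absC0, abs_of_nonneg (hf x)]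

theorem ofRealC0_re_add_I_smul_im (F : C₀(Ω, 𝕜)) :
    ofRealC0 𝕜 (compLeft ⟨RCLike.re, RCLike.continuous_re⟩ RCLike.zero_re F) +
      (RCLike.I : 𝕜) • ofRealC0 𝕜 (compLeft ⟨RCLike.im, RCLike.continuous_im⟩ RCLike.zero_im F)
      = F := by
  ext x
  simpa [mul_comm] using RCLike.re_add_im (F x)

def IsPositiveFunctional (ψ : C₀(Ω, 𝕜) →L[𝕜] 𝕜) : Prop :=
  ∀ f : C₀(Ω, ℝ), (∀ x, 0 ≤ f x) → ∃ r : ℝ, 0 ≤ r ∧ ψ (ofRealC0 𝕜 f) = r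

namespace IsPositiveFunctional

variable {ψ : C₀(Ω, 𝕜) →L[𝕜] 𝕜} (hψ : IsPositiveFunctional ψ)
include hψ

theorem re_apply_nonneg {f : C₀(Ω, ℝ)} (hf : ∀ x, 0 ≤ f x) :
    0 ≤ RCLike.re (ψ (ofRealC0 𝕜 f)) := by
  obtain ⟨r, hr, hψf⟩ := hψ f hf
  simpa [hψf] using hr

theorem re_apply_mono {f g : C₀(Ω, ℝ)} (hfg : ∀ x, f x ≤ g x) :
    RCLike.re (ψ (ofRealC0 𝕜 f)) ≤ RCLike.re (ψ (ofRealC0 𝕜 g)) := by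
  have := hψ.re_apply_nonneg (f := g - f) fun x => by simpa using hfg x
  rwa [ofRealC0_sub, map_sub, map_sub, sub_nonneg] at this

theorem im_apply_ofRealC0 (f : C₀(Ω, ℝ)) : RCLike.im (ψ (ofRealC0 𝕜 f)) = 0 := by
  obtain ⟨r₁, -, h₁⟩ := hψ (supC0 f 0) fun x => le_max_right (f x) 0
  obtain ⟨r₂, -, h₂⟩ := hψ (supC0 (-f) 0) fun x => le_max_right (-f x) 0
  have hf : supC0 f 0 - supC0 (-f) 0 = f := by
    ext x
    exact max_zero_sub_max_neg_zero_eq_self (f x)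
  rw [← hf, ofRealC0_sub, map_sub, h₁, h₂]
  simp

theorem re_apply_le {F : C₀(Ω, 𝕜)} {f : C₀(Ω, ℝ)} (hFf : ∀ x, ‖F x‖ ≤ f x) :
    RCLike.re (ψ F) ≤ RCLike.re (ψ (ofRealC0 𝕜 f)) := by
  conv_lhs => rw [← ofRealC0_re_add_I_smul_im F]
  rw [map_add, map_smul, smul_eq_mul, map_add, RCLike.mul_re, hψ.im_apply_ofRealC0]
  simpa using hψ.re_apply_mono fun x => (RCLike.re_le_norm (F x)).trans (hFf x)

theorem norm_apply_le {F : C₀(Ω, 𝕜)} {f : C₀(Ω, ℝ)} (hFf : ∀ x, ‖F x‖ ≤ f x) :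
    ‖ψ F‖ ≤ RCLike.re (ψ (ofRealC0 𝕜 f)) := by
  -- `u` rotates `ψ F` onto `[0, ∞)`; the junk value `0 / 0 = 0` covers `ψ F = 0`.
  set u : 𝕜 := star (ψ F) / ‖ψ F‖
  have hu : ‖u‖ ≤ 1 := by
    simpa [u, norm_div] using div_self_le_one ‖ψ F‖
  have huF : u * ψ F = ‖ψ F‖ := by
    rw [div_mul_eq_mul_div, RCLike.star_def, RCLike.conj_mul, sq, mul_self_div_self]
  calc ‖ψ F‖ = RCLike.re (ψ (u • F)) := by rw [map_smul, smul_eq_mul, huF, RCLike.ofReal_re]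
    _ ≤ RCLike.re (ψ (ofRealC0 𝕜 f)) := hψ.re_apply_le fun x => by
      simpa using (mul_le_of_le_one_left (norm_nonneg _) hu).trans (hFf x)

end IsPositiveFunctional

def cutoffC0 (δ : ℝ) (F : C₀(Ω, 𝕜)) : C₀(Ω, 𝕜) :=
  compLeft ⟨fun z => ((min (‖z‖ / δ) 1 : ℝ) : 𝕜), by fun_prop⟩ (by simp) F

theorem norm_cutoffC0_le {δ : ℝ} (hδ : 0 ≤ δ) (F : C₀(Ω, 𝕜)) : ‖cutoffC0 δ F‖ ≤ 1 :=
  (norm_le zero_le_one).2 fun x => by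
    have : 0 ≤ ‖F x‖ / δ := by positivity
    simp [cutoffC0, abs_of_nonneg (le_min this zero_le_one)]

theorem norm_sub_mul_cutoffC0_le {δ : ℝ} (hδ : 0 < δ) (F : C₀(Ω, 𝕜)) :
    ‖F - F * cutoffC0 δ F‖ ≤ δ :=
  (norm_le hδ.le).2 fun x => by
    set t := ‖F x‖
    have hsub : (F - F * cutoffC0 δ F) x = F x * ((1 - min (t / δ) 1 : ℝ) : 𝕜) := by
      simp [cutoffC0, t, mul_sub]
    have ht : 0 ≤ t / δ := by positivity
    rw [hsub, norm_mul, RCLike.norm_ofReal, abs_of_nonneg (by simp)]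
    rcases le_total t δ with htδ | htδ
    · nlinarith [min_le_right (t / δ) 1, le_min ht zero_le_one]
    · rw [min_eq_right ((one_le_div hδ).2 htδ)]
      simpa using hδ.le

theorem tendsto_mul_cutoffC0 (F : C₀(Ω, 𝕜)) :
    Tendsto (fun δ => F * cutoffC0 δ F) (𝓝[>] 0) (𝓝 F) := by
  rw [tendsto_iff_norm_sub_tendsto_zero]
  refine squeeze_zero' (Eventually.of_forall fun _ => norm_nonneg _)
    (eventually_nhdsWithin_of_forall fun δ (hδ : 0 < δ) => ?_)
    (tendsto_nhdsWithin_of_tendsto_nhds tendsto_id)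
  rw [norm_sub_rev]
  exact norm_sub_mul_cutoffC0_le hδ F

section DualValuedNorm

variable {M : C0Module 𝕜 Ω Γ} {N : Γ → C₀(Ω, 𝕜) →L[𝕜] 𝕜} (hnorm : ∀ s, ‖N s‖ = ‖s‖)
  (hmod : ∀ f g s, N (M.smul f s) g = N s (absC0 f * g))
include hnorm hmod

theorem norm_apply_absC0_le_norm_smul (F : C₀(Ω, 𝕜)) (s : Γ) :
    ‖N s (absC0 F)‖ ≤ ‖M.smul F s‖ := by
  have hlim := (((N s).continuous.tendsto _).comp (tendsto_mul_cutoffC0 (absC0 F))).norm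
  refine le_of_tendsto hlim (eventually_nhdsWithin_of_forall fun δ (hδ : 0 < δ) => ?_)
  calc ‖N s (absC0 F * cutoffC0 δ (absC0 F))‖ = ‖N (M.smul F s) (cutoffC0 δ (absC0 F))‖ := by
        rw [hmod]
    _ ≤ ‖N (M.smul F s)‖ * ‖cutoffC0 δ (absC0 F)‖ := (N _).le_opNorm _
    _ ≤ ‖M.smul F s‖ := by
        rw [hnorm]
        exact mul_le_of_le_one_right (norm_nonneg _) (norm_cutoffC0_le hδ.le _)

theorem norm_smul_le_re_apply {s : Γ} (hs : IsPositiveFunctional (N s)) {f : C₀(Ω, ℝ)}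
    (hf : ∀ x, 0 ≤ f x) : ‖M.smul (ofRealC0 𝕜 f) s‖ ≤ RCLike.re (N s (ofRealC0 𝕜 f)) := by
  rw [← hnorm]
  refine (N _).opNorm_le_bound (hs.re_apply_nonneg hf) fun g => ?_
  rw [hmod, absC0_ofRealC0 hf]
  calc ‖N s (ofRealC0 𝕜 f * g)‖ ≤ RCLike.re (N s (ofRealC0 𝕜 (‖g‖ • f))) :=
        hs.norm_apply_le fun x => ?_
    _ = RCLike.re (N s (ofRealC0 𝕜 f)) * ‖g‖ := by
        rw [ofRealC0_smul, map_smul, smul_eq_mul, RCLike.re_ofReal_mul, mul_comm]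
  simpa [abs_of_nonneg (hf x), mul_comm] using
    mul_le_mul_of_nonneg_left (norm_apply_le g x) (hf x)

end DualValuedNorm

theorem dual_valued_norm_unique
    (M : C0Module 𝕜 Ω Γ)
    (N : Γ → (C₀(Ω, 𝕜) →L[𝕜] 𝕜))
    (hpos : ∀ (s : Γ) (f : C₀(Ω, ℝ)), (∀ x, 0 ≤ f x) →
      ∃ r : ℝ, 0 ≤ r ∧ N s (ofRealC0 𝕜 f) = (r : 𝕜))
    (hnorm : ∀ s : Γ, ‖N s‖ = ‖s‖)
    (hmod : ∀ (f g : C₀(Ω, 𝕜)) (s : Γ), N (M.smul f s) g = N s (absC0 f * g)) :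
    ∀ (s : Γ) (f : C₀(Ω, ℝ)), (∀ x, 0 ≤ f x) →
      N s (ofRealC0 𝕜 f) = (‖M.smul (ofRealC0 𝕜 f) s‖ : 𝕜) := by
  intro s f hf
  obtain ⟨r, -, hr⟩ := hpos s f hf
  have hupper := norm_apply_absC0_le_norm_smul hnorm hmod (ofRealC0 𝕜 f) s
  have hlower := norm_smul_le_re_apply hnorm hmod (hpos s) hf
  rw [absC0_ofRealC0 hf, hr, RCLike.norm_ofReal] at hupper
  rw [hr, RCLike.ofReal_re] at hlower
  rw [hr, le_antisymm ((le_abs_self r).trans hupper) hlower]
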